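/- For every real number α with α ∉ 4ℤ and α ∉ 1 + 4ℤ, the matrix product Z(α) · Y(α) equals (√2/(cot(πα/4) − 1)) · I₄. (This is the bubble-pop identity Y† Y = B^{α1}_{α−1} · Id for the splitting map of the anyon (α−1) into the pair (α, 1).) -/

import Mathlib

open Complex Matrix

/-- Complex powers of `q = e^{iπ/4}`: `q^z := e^{iπz/4}`. -/
noncomputable def qp (z : ℂ) : ℂ := Complex.exp (Complex.I * Real.pi * z / 4)

/-- The `8×4` matrix of the splitting map `Y^{α1}_{α−1} : (α−1) → α ⊗ 1` in the
non-semisimple Ising model at `r = 4`, rows indexed lexicographically by `(m, ε)` with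
`m ∈ {0,1,2,3}`, `ε ∈ {0,1}`. -/
noncomputable def Ymat (α : ℝ) : Matrix (Fin 8) (Fin 4) ℂ :=
  !![0, 0, 0, 0;
     1, 0, 0, 0;
     (qp 2 - 1) / (qp (α + 1) - qp (3 - α)), 0, 0, 0;
     0, (-qp (2 * α + 2) + qp 4 - qp 2 + 1) / (qp 4 - qp (2 * α + 2)), 0, 0;
     0, (qp 2 - 1) / (qp (α + 1) - qp (3 - α)), 0, 0;
     0, 0, (1 - qp (2 * α + 2)) / (qp 4 - qp (2 * α + 2)), 0;
     0, 0, (qp 2 - 1) / (qp (α + 1) - qp (3 - α)), 0;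
     0, 0, 0, (-qp (2 * α + 2) - qp 6 + qp 4 + 1) / (qp 4 - qp (2 * α + 2))]

/-- The `4×8` matrix of the Hermitian adjoint `(Y^{α1}_{α−1})†`. -/
noncomputable def Zmat (α : ℝ) : Matrix (Fin 4) (Fin 8) ℂ :=
  !![0, -qp 1, -qp (2 - α), 0, 0, 0, 0, 0;
     0, 0, 0, -qp 1, qp (-α) * (1 - qp 2), 0, 0, 0;
     0, 0, 0, 0, 0, -qp 1, qp (-α), 0;
     0, 0, 0, 0, 0, 0, 0, -qp 1]

/-!
Put `t = q^α`. With `q² = i` and `q⁴ = -1`, every entry of `Z(α)·Y(α)` is a rational function of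
`q` and `t`: the off-diagonal ones vanish identically and each diagonal one simplifies to
`q (1 - t²) / (t² - i)`. On the scalar side, `cot (πα/4) = i (t² + 1) / (t² - 1)` and
`√2 = q (1 - i)`, which turn `√2 / (cot (πα/4) - 1)` into the same expression. The conditions
`α ∉ 4ℤ` and `α ∉ 1 + 4ℤ` say exactly that `t² ≠ 1` and `t² ≠ i`.
-/

open Real

lemma qp_add (a b : ℂ) : qp (a + b) = qp a * qp b := by
  rw [qp, qp, qp, ← Complex.exp_add]; ring_nf

lemma qp_neg (a : ℂ) : qp (-a) = (qp a)⁻¹ := by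
  rw [qp, qp, ← Complex.exp_neg]; ring_nf

lemma qp_ne_zero (a : ℂ) : qp a ≠ 0 := Complex.exp_ne_zero _

lemma qp_sq (a : ℂ) : qp a ^ 2 = qp (2 * a) := by rw [sq, ← qp_add, two_mul]

lemma qp_zero : qp 0 = 1 := by simp [qp]

lemma qp_two : qp 2 = I := by
  rw [qp, show I * π * 2 / 4 = (π / 2 : ℝ) * I by push_cast; ring, exp_mul_I,
    ← ofReal_cos, ← ofReal_sin, Real.cos_pi_div_two, Real.sin_pi_div_two]
  simp

lemma qp_eq_qp_iff {x y : ℂ} : qp x = qp y ↔ ∃ n : ℤ, x = y + 8 * n := by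
  have hπ : I * π / 4 ≠ 0 := by simp [Real.pi_ne_zero]
  simp only [qp, exp_eq_exp_iff_exists_int]
  refine exists_congr fun n => ⟨fun h => mul_left_cancel₀ hπ ?_, fun h => ?_⟩
  · linear_combination h
  · rw [h]; ring

lemma qp_one_mul_one_sub_I : qp 1 * (1 - I) = √2 := by
  rw [qp, show I * π * 1 / 4 = (π / 4 : ℝ) * I by push_cast; ring, exp_mul_I,
    ← ofReal_cos, ← ofReal_sin, Real.cos_pi_div_four, Real.sin_pi_div_four]
  push_cast
  linear_combination (-(√2 : ℂ) / 2) * I_sq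

lemma qp_ofReal_sq_ne_one {α : ℝ} (h : ∀ k : ℤ, α ≠ 4 * k) : qp α ^ 2 ≠ 1 := by
  rw [qp_sq, ← qp_zero, Ne, qp_eq_qp_iff]
  rintro ⟨k, hk⟩
  exact h k (by exact_mod_cast (by linear_combination hk / 2 : (α : ℂ) = 4 * k))

lemma qp_ofReal_sq_ne_I {α : ℝ} (h : ∀ k : ℤ, α ≠ 1 + 4 * k) : qp α ^ 2 ≠ I := by
  rw [qp_sq, ← qp_two, Ne, qp_eq_qp_iff]
  rintro ⟨k, hk⟩
  exact h k (by exact_mod_cast (by linear_combination hk / 2 : (α : ℂ) = 1 + 4 * k))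

lemma sqrt_two_div_cot_sub_one (α : ℝ) (h1 : qp α ^ 2 ≠ 1) (hI : qp α ^ 2 ≠ I) :
    ((√2 / (Real.cot (π * α / 4) - 1) : ℝ) : ℂ) = qp 1 * (1 - qp α ^ 2) / (qp α ^ 2 - I) := by
  have hexp : exp (2 * π * I * (α / 4 : ℂ)) = qp α ^ 2 := by
    rw [qp_sq, qp]; ring_nf
  have h1' : 1 - qp α ^ 2 ≠ 0 := sub_ne_zero.2 h1.symm
  have hI' : qp α ^ 2 - I ≠ 0 := sub_ne_zero.2 hI
  have hcot : (qp α ^ 2 + 1) / (I * (1 - qp α ^ 2)) - 1 =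
      (1 - I) * (qp α ^ 2 - I) / (1 - qp α ^ 2) := by
    field_simp
    linear_combination (1 + qp α ^ 2 - I) * I_sq
  have h1I : (1 : ℂ) - I ≠ 0 := by simp [sub_eq_zero, Complex.ext_iff]
  push_cast
  rw [show (π * α / 4 : ℂ) = π * (α / 4 : ℂ) by ring, cot_pi_eq_exp_ratio, hexp, hcot,
    ← qp_one_mul_one_sub_I]
  field_simp

lemma Zmat_mul_Ymat (α : ℝ) (hI : qp α ^ 2 ≠ I) :
    Zmat α * Ymat α = (qp 1 * (1 - qp α ^ 2) / (qp α ^ 2 - I)) • 1 := by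
  have h4 : qp 4 = -1 := by rw [show (4 : ℂ) = 2 + 2 by norm_num, qp_add, qp_two, I_mul_I]
  have h6 : qp 6 = -I := by rw [show (6 : ℂ) = 4 + 2 by norm_num, qp_add, h4, qp_two]; ring
  have h2α : qp (2 * α + 2) = qp α ^ 2 * I := by rw [qp_add, qp_sq, qp_two]
  have h2 : qp (2 - α) = I * (qp α)⁻¹ := by rw [sub_eq_add_neg, qp_add, qp_two, qp_neg]
  have hA : qp (α + 1) - qp (3 - α) = qp 1 * (qp α ^ 2 - I) / qp α := by
    rw [show (3 : ℂ) - α = 2 + 1 + -α by ring, qp_add, qp_add, qp_add, qp_two, qp_neg]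
    field_simp [qp_ne_zero]
  have hq : qp 1 ^ 2 = I := by rw [qp_sq, mul_one, qp_two]
  have htI : qp α ^ 2 - I ≠ 0 := sub_ne_zero.2 hI
  have hden : -1 - qp α ^ 2 * I ≠ 0 := by
    rw [show -1 - qp α ^ 2 * I = -I * (qp α ^ 2 - I) by linear_combination -I_sq]
    exact mul_ne_zero (neg_ne_zero.2 I_ne_zero) htI
  have hα0 := qp_ne_zero α
  have hq0 := qp_ne_zero 1
  ext i j
  fin_cases i <;> fin_cases j <;>
    simp [Zmat, Ymat, Matrix.mul_apply, Fin.sum_univ_succ, qp_neg, qp_two, h2, h4, h6, h2α, hA] <;>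
    field_simp <;> (try rw [hq])
  · ring
  · linear_combination (1 - I) * I_sq
  · linear_combination (1 - I * qp α ^ 2) * I_sq
  · linear_combination (1 - qp α ^ 2) * I_sq

/-- The bubble-pop identity `Y† Y = B^{α1}_{α−1} · Id` for the splitting of the anyon
`(α−1)` into the pair `(α, 1)`: `Z(α)·Y(α) = (√2/(cot(πα/4) − 1))·I₄`. -/
theorem bubble_pop (α : ℝ)
    (h1 : ∀ k : ℤ, α ≠ 4 * k) (h2 : ∀ k : ℤ, α ≠ 1 + 4 * k) :
    Zmat α * Ymat α =
      (((Real.sqrt 2 / (Real.cot (Real.pi * α / 4) - 1) : ℝ)) : ℂ) •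
        (1 : Matrix (Fin 4) (Fin 4) ℂ) := by
  have hI := qp_ofReal_sq_ne_I h2
  rw [sqrt_two_div_cot_sub_one α (qp_ofReal_sq_ne_one h1) hI, Zmat_mul_Ymat α hI]
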